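/- In Picaria, the Race position is a win for X: let c be the configuration with c(0,2) = O, c(1,1) = X, c(1,2) = O, c(2,0) = X, c(2,1) = O, c(2,2) = X and all other cells empty. Then the state (c, X) with X to move is in WinningFor X. -/

import Mathlib

/-- The two players of Picaria. -/
inductive Player : Type
  | X : Player
  | O : Player
deriving DecidableEq

instance instFintypePlayer : Fintype Player :=
  ⟨{Player.X, Player.O}, fun x => by cases x <;> simp⟩

/-- The opponent of a player. -/
def Player.other : Player → Player
  | Player.X => Player.O
  | Player.O => Player.X

/-- A cell of the 3×3 board, written (row, column), 0-indexed. -/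
abbrev Cell : Type := Fin 3 × Fin 3

/-- A configuration assigns to each cell an optional stone. -/
abbrev Config : Type := Cell → Option Player

/-- King-move adjacency on the board: distinct cells whose coordinates
differ by at most 1 each. -/
def adjacent (a b : Cell) : Prop :=
  a ≠ b ∧ |((a.1 : ℕ) : ℤ) - ((b.1 : ℕ) : ℤ)| ≤ 1 ∧
    |((a.2 : ℕ) : ℤ) - ((b.2 : ℕ) : ℤ)| ≤ 1

/-- The 8 lines of the board: 3 rows, 3 columns, 2 main diagonals. -/
def lines : List (Cell × Cell × Cell) :=
  [((0,0),(0,1),(0,2)), ((1,0),(1,1),(1,2)), ((2,0),(2,1),(2,2)),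
   ((0,0),(1,0),(2,0)), ((0,1),(1,1),(2,1)), ((0,2),(1,2),(2,2)),
   ((0,0),(1,1),(2,2)), ((0,2),(1,1),(2,0))]

/-- Player `p` has three-in-a-row in configuration `c`. -/
def threeInARow (c : Config) (p : Player) : Prop :=
  ∃ l ∈ lines, c l.1 = some p ∧ c l.2.1 = some p ∧ c l.2.2 = some p

/-- The number of stones of player `p` on the board. -/
def stoneCount (c : Config) (p : Player) : ℕ :=
  (Finset.univ.filter fun x : Cell => c x = some p).card

/-- Legal moves of player `t` from configuration `c`, producing `c'`:
placement on an empty cell while `t` has fewer than 3 stones on the board;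
otherwise a slide of one of `t`'s stones to an adjacent empty cell. -/
def Move (t : Player) (c c' : Config) : Prop :=
  (stoneCount c t < 3 ∧ ∃ x : Cell, c x = none ∧ c' = Function.update c x (some t)) ∨
  (3 ≤ stoneCount c t ∧ ∃ x y : Cell, c x = some t ∧ c y = none ∧ adjacent x y ∧
    c' = Function.update (Function.update c x none) y (some t))

/-- `WinningFor p` is the least set of states (configuration, player to move) such that:
(i) `(c, p)` is winning for `p` if some legal move of `p` immediately makes a
three-in-a-row for `p`, or leads to a state winning for `p`;
(ii) `(c, q)` (for `q` the opponent of `p`) is winning for `p` if `q` has at least one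
legal move, and every legal move of `q` yields a configuration with no three-in-a-row
for `q` together with a state winning for `p`. -/
inductive WinningFor (p : Player) : Config × Player → Prop
  | moveWin (c c' : Config) (h : Move p c c') (hw : threeInARow c' p) :
      WinningFor p (c, p)
  | moveStep (c c' : Config) (h : Move p c c') (hw : WinningFor p (c', p.other)) :
      WinningFor p (c, p)
  | forced (c : Config) (hne : ∃ c', Move p.other c c')
      (hnowin : ∀ c', Move p.other c c' → ¬ threeInARow c' p.other)
      (hall : ∀ c', Move p.other c c' → WinningFor p (c', p)) :
      WinningFor p (c, p.other)
/-- The Race position. -/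
def race : Config := fun x =>
  if x = ((0 : Fin 3), (2 : Fin 3)) then some Player.O
  else if x = ((1 : Fin 3), (1 : Fin 3)) then some Player.X
  else if x = ((1 : Fin 3), (2 : Fin 3)) then some Player.O
  else if x = ((2 : Fin 3), (0 : Fin 3)) then some Player.X
  else if x = ((2 : Fin 3), (1 : Fin 3)) then some Player.O
  else if x = ((2 : Fin 3), (2 : Fin 3)) then some Player.X
  else none


namespace PicariaSearch

def cellsL : List Cell :=
  [(0,0),(0,1),(0,2),(1,0),(1,1),(1,2),(2,0),(2,1),(2,2)]

lemma mem_cellsL : ∀ x : Cell, x ∈ cellsL := by decide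

instance : DecidablePred (threeInARow · Player.X) := fun c => by
  unfold threeInARow; infer_instance

instance (c : Config) (p : Player) : Decidable (threeInARow c p) := by
  unfold threeInARow; infer_instance

instance (a b : Cell) : Decidable (adjacent a b) := by
  unfold adjacent; infer_instance

def movesL (t : Player) (c : Config) : List Config :=
  if stoneCount c t < 3 then
    (cellsL.filter fun x => decide (c x = none)).map
      fun x => Function.update c x (some t)
  else
    cellsL.flatMap fun x =>
      if c x = some t then
        (cellsL.filter fun y => decide (c y = none) && decide (adjacent x y)).map
          fun y => Function.update (Function.update c x none) y (some t)
      else []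

lemma movesL_sound {t : Player} {c c' : Config} (h : c' ∈ movesL t c) :
    Move t c c' := by
  unfold movesL at h
  split at h
  · next hlt =>
    simp only [List.mem_map, List.mem_filter, decide_eq_true_eq] at h
    obtain ⟨x, ⟨_, hx⟩, rfl⟩ := h
    exact Or.inl ⟨hlt, x, hx, rfl⟩
  · next hge =>
    simp only [List.mem_flatMap] at h
    obtain ⟨x, _, hx⟩ := h
    split at hx
    · next hcx =>
      simp only [List.mem_map, List.mem_filter, Bool.and_eq_true, decide_eq_true_eq] at hx
      obtain ⟨y, ⟨_, hy, hadj⟩, rfl⟩ := hx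
      exact Or.inr ⟨Nat.le_of_not_lt hge, x, y, hcx, hy, hadj, rfl⟩
    · simp at hx

lemma movesL_complete {t : Player} {c c' : Config} (h : Move t c c') :
    c' ∈ movesL t c := by
  unfold movesL
  rcases h with ⟨hlt, x, hx, rfl⟩ | ⟨hge, x, y, hx, hy, hadj, rfl⟩
  · rw [if_pos hlt]
    simp only [List.mem_map, List.mem_filter, decide_eq_true_eq]
    exact ⟨x, ⟨mem_cellsL x, hx⟩, rfl⟩
  · rw [if_neg (Nat.not_lt.2 hge)]
    simp only [List.mem_flatMap]
    refine ⟨x, mem_cellsL x, ?_⟩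
    rw [if_pos hx]
    simp only [List.mem_map, List.mem_filter, Bool.and_eq_true, decide_eq_true_eq]
    exact ⟨y, ⟨mem_cellsL y, hy, hadj⟩, rfl⟩

def winX : ℕ → Config → Player → Bool
  | 0, _, _ => false
  | n+1, c, Player.X =>
      (movesL Player.X c).any fun c' =>
        decide (threeInARow c' Player.X) || winX n c' Player.O
  | n+1, c, Player.O =>
      !(movesL Player.O c).isEmpty &&
      (movesL Player.O c).all fun c' =>
        !decide (threeInARow c' Player.O) && winX n c' Player.X

lemma winX_sound : ∀ (n : ℕ) (c : Config) (t : Player),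
    winX n c t = true → WinningFor Player.X (c, t) := by
  intro n
  induction n with
  | zero => intro c t h; simp [winX] at h
  | succ n ih =>
    intro c t h
    cases t with
    | X =>
      simp only [winX, List.any_eq_true, Bool.or_eq_true, decide_eq_true_eq] at h
      obtain ⟨c', hmem, hwin⟩ := h
      rcases hwin with h3 | hrec
      · exact WinningFor.moveWin c c' (movesL_sound hmem) h3
      · exact WinningFor.moveStep c c' (movesL_sound hmem) (ih c' Player.O hrec)
    | O =>
      simp only [winX, Bool.and_eq_true, Bool.not_eq_true', List.isEmpty_eq_false_iff_exists_mem,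
        List.all_eq_true, Bool.not_eq_eq_eq_not, Bool.not_true, decide_eq_false_iff_not] at h
      obtain ⟨⟨c0, hc0⟩, hall⟩ := h
      have : Player.O = Player.X.other := rfl
      rw [show ((c, Player.O) : Config × Player) = (c, Player.X.other) from rfl]
      refine WinningFor.forced c ⟨c0, movesL_sound hc0⟩ ?_ ?_
      · intro c' hm
        exact ((hall c' (movesL_complete hm)).1)
      · intro c' hm
        exact ih c' Player.X ((hall c' (movesL_complete hm)).2)

end PicariaSearch

/-- The Race position, with X to move, is a win for X. -/
theorem picaria_race_X_wins : WinningFor Player.X (race, Player.X) := by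
  exact PicariaSearch.winX_sound 3 race Player.X (by decide)
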